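/- If S ~ N(μ, 1) with μ ≠ 0, then the two-sided p-value p(S) = 2(1 - Φ(|S|)) is stochastically smaller than the uniform distribution: for all t ∈ (0,1), P(p(S) < t) > t. -/

import Mathlib

open MeasureTheory

noncomputable def stdNormalPDF (x : ℝ) : ℝ :=
  (Real.sqrt (2 * Real.pi))⁻¹ * Real.exp (-x ^ 2 / 2)

noncomputable def Phi (x : ℝ) : ℝ := ∫ t in Set.Iic x, stdNormalPDF t

/-!
With `c = Φ⁻¹(1 - t/2) > 0`, the event `{p(S) < t}` is `{|S| > c}`, whose probability is
`1 - (Φ(c - μ₀) - Φ(-c - μ₀))`; for `μ₀ = 0` this is exactly `t`. Shifting the interval `[-c, c]` by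
`m > 0` loses the mass `∫₀ᵐ φ(c - s) ds` at its right end and gains only `∫₀ᵐ φ(c + s) ds` at its
left end, which is strictly smaller because `φ` is even and strictly decreasing on `[0, ∞)`; the
case `m < 0` follows by the symmetry `Φ(-x) = 1 - Φ(x)`.
-/

open Set Filter Topology ProbabilityTheory

lemma stdNormalPDF_eq_gaussianPDFReal : stdNormalPDF = gaussianPDFReal 0 1 := by
  ext x
  simp [stdNormalPDF, gaussianPDFReal]

lemma stdNormalPDF_pos (x : ℝ) : 0 < stdNormalPDF x := by
  rw [stdNormalPDF_eq_gaussianPDFReal]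
  exact gaussianPDFReal_pos _ _ _ one_ne_zero

@[fun_prop]
lemma continuous_stdNormalPDF : Continuous stdNormalPDF := by
  unfold stdNormalPDF
  fun_prop

lemma integrable_stdNormalPDF : Integrable stdNormalPDF := by
  rw [stdNormalPDF_eq_gaussianPDFReal]
  exact integrable_gaussianPDFReal _ _

lemma integral_stdNormalPDF : ∫ x, stdNormalPDF x = 1 := by
  rw [stdNormalPDF_eq_gaussianPDFReal]
  exact integral_gaussianPDFReal_eq_one _ one_ne_zero

lemma stdNormalPDF_neg (x : ℝ) : stdNormalPDF (-x) = stdNormalPDF x := by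
  simp [stdNormalPDF]

lemma stdNormalPDF_le_of_sq_le {x y : ℝ} (h : y ^ 2 ≤ x ^ 2) :
    stdNormalPDF x ≤ stdNormalPDF y := by
  unfold stdNormalPDF
  gcongr

lemma stdNormalPDF_lt_of_sq_lt {x y : ℝ} (h : y ^ 2 < x ^ 2) :
    stdNormalPDF x < stdNormalPDF y := by
  unfold stdNormalPDF
  gcongr

lemma Phi_sub_Phi (a b : ℝ) : Phi b - Phi a = ∫ x in a..b, stdNormalPDF x :=
  intervalIntegral.integral_Iic_sub_Iic integrable_stdNormalPDF.integrableOn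
    integrable_stdNormalPDF.integrableOn

lemma Phi_strictMono : StrictMono Phi := fun a b hab => by
  have := intervalIntegral.intervalIntegral_pos_of_pos
    integrable_stdNormalPDF.intervalIntegrable stdNormalPDF_pos hab
  linarith [Phi_sub_Phi a b]

@[fun_prop]
lemma continuous_Phi : Continuous Phi := by
  have h : Phi = fun x => Phi 0 + ∫ t in (0 : ℝ)..x, stdNormalPDF t := by
    ext x
    linarith [Phi_sub_Phi 0 x]
  rw [h]
  exact continuous_const.add (integrable_stdNormalPDF.continuous_primitive 0)

lemma tendsto_Phi_atTop : Tendsto Phi atTop (𝓝 1) := by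
  have h := tendsto_setIntegral_of_monotone (fun x => measurableSet_Iic) monotone_Iic
    (integrable_stdNormalPDF.integrableOn (s := ⋃ x : ℝ, Iic x))
  rwa [iUnion_Iic, Measure.restrict_univ, integral_stdNormalPDF] at h

lemma Phi_neg (x : ℝ) : Phi (-x) = 1 - Phi x := by
  have h_tail : Phi (-x) = ∫ t in Ioi x, stdNormalPDF t := by
    rw [Phi, ← neg_neg x, ← integral_comp_neg_Iic, neg_neg]
    simp_rw [stdNormalPDF_neg]
  have h_split := intervalIntegral.integral_Iic_add_Ioi (b := x)
    integrable_stdNormalPDF.integrableOn integrable_stdNormalPDF.integrableOn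
  rw [integral_stdNormalPDF] at h_split
  rw [h_tail, ← h_split, Phi]
  ring

lemma Phi_zero : Phi 0 = 1 / 2 := by
  linarith [neg_zero (G := ℝ) ▸ Phi_neg 0]

lemma exists_pos_Phi_eq {p : ℝ} (hp : 1 / 2 < p) (hp1 : p < 1) : ∃ c, 0 < c ∧ Phi c = p := by
  obtain ⟨b, hb⟩ := (tendsto_Phi_atTop.eventually (eventually_ge_nhds hp1)).exists
  obtain ⟨c, hc⟩ := mem_range_of_exists_le_of_exists_ge continuous_Phi
    ⟨0, Phi_zero.trans_le hp.le⟩ ⟨b, hb⟩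
  exact ⟨c, Phi_strictMono.lt_iff_lt.mp (by rw [Phi_zero, hc]; exact hp), hc⟩

lemma Phi_sub_Phi_shift_lt_of_pos {c m : ℝ} (hc : 0 < c) (hm : 0 < m) :
    Phi (c - m) - Phi (-c - m) < Phi c - Phi (-c) := by
  have h_out : ∫ s in (0 : ℝ)..m, stdNormalPDF (c - s) = Phi c - Phi (c - m) := by
    rw [intervalIntegral.integral_comp_sub_left, sub_zero, Phi_sub_Phi]
  have h_in : ∫ s in (0 : ℝ)..m, stdNormalPDF (c + s) = Phi (-c) - Phi (-c - m) := by
    simp_rw [← stdNormalPDF_neg (c + _), neg_add']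
    rw [intervalIntegral.integral_comp_sub_left, sub_zero, Phi_sub_Phi]
  have h_lt :
      ∫ s in (0 : ℝ)..m, stdNormalPDF (c + s) < ∫ s in (0 : ℝ)..m, stdNormalPDF (c - s) :=
    intervalIntegral.integral_lt_integral_of_continuousOn_of_le_of_exists_lt hm
      (by fun_prop) (by fun_prop)
      (fun s hs => stdNormalPDF_le_of_sq_le (by nlinarith [hs.1]))
      ⟨m, right_mem_Icc.2 hm.le, stdNormalPDF_lt_of_sq_lt (by nlinarith)⟩
  linarith

lemma Phi_sub_Phi_shift_neg (c m : ℝ) :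
    Phi (c + m) - Phi (-c + m) = Phi (c - m) - Phi (-c - m) := by
  rw [show c + m = -(-c - m) by ring, show -c + m = -(c - m) by ring, Phi_neg, Phi_neg]
  ring

lemma Phi_sub_Phi_shift_lt {c m : ℝ} (hc : 0 < c) (hm : m ≠ 0) :
    Phi (c - m) - Phi (-c - m) < Phi c - Phi (-c) := by
  rcases hm.lt_or_gt with hm | hm
  · rw [← Phi_sub_Phi_shift_neg]
    simpa [sub_eq_add_neg] using Phi_sub_Phi_shift_lt_of_pos hc (neg_pos.2 hm)
  · exact Phi_sub_Phi_shift_lt_of_pos hc hm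

section Law

variable {Ω : Type*} [MeasurableSpace Ω] {μ : Measure Ω} {S : Ω → ℝ} {F : ℝ → ℝ}

lemma measureReal_lt_eq_of_continuous [IsFiniteMeasure μ] (hF : Continuous F)
    (hlaw : ∀ x, μ.real {ω | S ω ≤ x} = F x) (x : ℝ) : μ.real {ω | S ω < x} = F x := by
  obtain ⟨u, hu_mono, hu_lt, hu⟩ := exists_seq_strictMono_tendsto x
  have h_union : {ω | S ω < x} = ⋃ n, {ω | S ω ≤ u n} := by
    ext ω
    simp only [mem_ofPred_eq, mem_iUnion]
    refine ⟨fun h => ?_, fun ⟨n, hn⟩ => hn.trans_lt (hu_lt n)⟩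
    obtain ⟨n, hn⟩ := (hu.eventually (eventually_gt_nhds h)).exists
    exact ⟨n, hn.le⟩
  have h_lim : Tendsto (fun n => μ.real {ω | S ω ≤ u n}) atTop (𝓝 (μ.real {ω | S ω < x})) := by
    rw [h_union]
    exact (ENNReal.tendsto_toReal (measure_ne_top μ _)).comp <| tendsto_measure_iUnion_atTop
      fun m n hmn ω (h : S ω ≤ u m) => h.trans (hu_mono.monotone hmn)
  simp_rw [hlaw] at h_lim
  exact tendsto_nhds_unique h_lim ((hF.tendsto x).comp hu)

lemma measureReal_lt_abs_eq [IsProbabilityMeasure μ] (hS : Measurable S) (hF : Continuous F)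
    (hlaw : ∀ x, μ.real {ω | S ω ≤ x} = F x) {c : ℝ} (hc : 0 ≤ c) :
    μ.real {ω | c < |S ω|} = 1 - (F c - F (-c)) := by
  have h_split : {ω | c < |S ω|} = {ω | S ω ≤ c}ᶜ ∪ {ω | S ω < -c} := by
    ext ω
    simp only [mem_ofPred_eq, mem_union, mem_compl_iff, not_le, lt_abs, lt_neg]
  have h_disj : Disjoint {ω | S ω ≤ c}ᶜ {ω | S ω < -c} :=
    disjoint_left.2 fun ω (h₁ : ¬S ω ≤ c) (h₂ : S ω < -c) => h₁ (by linarith)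
  rw [h_split, measureReal_union h_disj (hS measurableSet_Iio),
    probReal_compl_eq_one_sub (s := {ω | S ω ≤ c}) (hS measurableSet_Iic), hlaw,
    measureReal_lt_eq_of_continuous hF hlaw]
  ring

end Law

/-- If `S ~ N(μ₀, 1)` with `μ₀ ≠ 0`, the two-sided p-value `2(1 - Φ(|S|))` is
stochastically smaller than uniform: `P(p(S) < t) > t` for all `t ∈ (0,1)`. -/
theorem twoSided_pvalue_stochastically_smaller_of_normal_alternative
    {Ω : Type*} [MeasurableSpace Ω] (μ : Measure Ω) [IsProbabilityMeasure μ]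
    (S : Ω → ℝ) (hS : Measurable S) (μ₀ : ℝ) (hμ₀ : μ₀ ≠ 0)
    (hlaw : ∀ x, (μ {ω | S ω ≤ x}).toReal = Phi (x - μ₀)) :
    ∀ t ∈ Set.Ioo (0:ℝ) 1, t < (μ {ω | 2 * (1 - Phi |S ω|) < t}).toReal := by
  rintro t ⟨ht0, ht1⟩
  obtain ⟨c, hc0, hc⟩ := exists_pos_Phi_eq (p := 1 - t / 2) (by linarith) (by linarith)
  have h_event : {ω | 2 * (1 - Phi |S ω|) < t} = {ω | c < |S ω|} := by
    ext ω
    change 2 * (1 - Phi |S ω|) < t ↔ c < |S ω|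
    rw [← Phi_strictMono.lt_iff_lt (a := c), hc]
    constructor <;> intro h <;> linarith
  rw [h_event, ← measureReal_def, measureReal_lt_abs_eq hS (by fun_prop) hlaw hc0.le]
  linarith [Phi_sub_Phi_shift_lt hc0 hμ₀, Phi_neg c]
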